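/- Let A be an algebraic curvature tensor on a nondegenerate inner product space V. Then the Jacobi operators pairwise commute (J(x)J(y) = J(y)J(x) for all x,y in V) if and only if every Jacobi operator commutes with every curvature operator (J(x)R(y,z) = R(y,z)J(x) for all x,y,z in V). -/

import Mathlib

/-!
For a self-adjoint `T`, commuting with every Jacobi operator `J(t)` says
`A(u,t,t,Tw) = A(Tu,t,t,w)`, and commuting with every `R(y,z)` says `A(a,b,c,Td) = A(a,b,Tc,d)`;
the theorem is the equivalence of the two for `T = J(x)`. The second condition makes
`A(·,·,·,T·)` antisymmetric in its last pair, hence, by the Bianchi identity, pair symmetric, which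
moves `T` to the first slot and gives the first condition. Conversely, polarizing the first
condition in `t` shows that `S(u,b,c,w) = A(u,b,c,Tw) + A(u,c,b,Tw)` is symmetric in `u, w`, and
the Bianchi identity recovers `A(·,·,·,T·)` from `S` as `3 A(a,b,c,Td) = S(a,b,c,d) - S(b,a,c,d)`,
which forces antisymmetry in the last pair.
-/

section CurvatureTensor

variable {𝕜 V : Type*} [Field 𝕜]

theorem three_mul_eq_of_bianchi {X : V → V → V → V → 𝕜}
    (anti : ∀ a b c d, X a b c d = -X b a c d)
    (bianchi : ∀ a b c d, X a b c d + X b c a d + X c a b d = 0) (a b c d : V) :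
    3 * X a b c d = (X a b c d + X a c b d) - (X b a c d + X b c a d) := by
  linear_combination anti a b c d - anti c a b d + bianchi a b c d

theorem pair_symm_of_bianchi [CharZero 𝕜] {X : V → V → V → V → 𝕜}
    (anti : ∀ a b c d, X a b c d = -X b a c d) (anti' : ∀ a b c d, X a b c d = -X a b d c)
    (bianchi : ∀ a b c d, X a b c d + X b c a d + X c a b d = 0) (a b c d : V) :
    X a b c d = X c d a b := by
  linear_combination (bianchi a b c d + bianchi b c d a - bianchi c d a b - bianchi d a b c
    - anti c a b d - anti d b c a + anti d a c b + anti d a b c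
    - anti' b c d a - anti' c d b a + anti' b d c a - anti' a d c b + anti' a c d b
    + anti' a b d c) / 2

theorem antisymm_right_of_bianchi [CharZero 𝕜] {N : V → V → V → V → 𝕜}
    (anti : ∀ a b c d, N a b c d = -N b a c d)
    (bianchi : ∀ a b c d, N a b c d + N b c a d + N c a b d = 0)
    (symm : ∀ u b c w, N u b c w + N u c b w = N w b c u + N w c b u) (a b c d : V) :
    N a b c d = -N a b d c := by
  linear_combination (three_mul_eq_of_bianchi anti bianchi a b c d
    + three_mul_eq_of_bianchi anti bianchi a b d c
    + symm a b c d - symm b a c d + symm a b d c - symm b a d c - symm b c d a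
    + anti d c b a + anti d b c a + anti c b d a - anti d c a b - anti d a c b - anti c a d b) / 3

structure IsCurvatureTensor (X : V → V → V → V → 𝕜) : Prop where
  pair : ∀ x y z w, X x y z w = X z w x y
  anti : ∀ x y z w, X x y z w = -X y x z w
  bianchi : ∀ x y z w, X x y z w + X y z x w + X z x y w = 0

namespace IsCurvatureTensor

section

variable {X : V → V → V → V → 𝕜} (hX : IsCurvatureTensor X)
include hX

theorem anti_right (a b c d : V) : X a b c d = -X a b d c := by
  linear_combination hX.pair a b c d + hX.anti c d a b - hX.pair d c a b

theorem reverse (a b c d : V) : X a b c d = X d c b a := by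
  linear_combination hX.anti a b c d - hX.anti_right b a c d + hX.pair b a d c

theorem apply_map_last_eq_apply_map_first [CharZero 𝕜] {T : V → V}
    (hT : ∀ a b c d, X a b c (T d) = X a b (T c) d) (a b c d : V) :
    X a b c (T d) = X (T a) b c d := by
  have anti' (a b c d : V) : X a b c (T d) = -X a b d (T c) := by
    rw [hT, hX.anti_right]
  calc X a b c (T d) = X c d a (T b) :=
        pair_symm_of_bianchi (fun a b c d ↦ hX.anti a b c (T d)) anti'
          (fun a b c d ↦ hX.bianchi a b c (T d)) a b c d
    _ = X (T a) b c d := by rw [hT, hX.pair]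

end

variable [AddCommGroup V] [Module 𝕜 V] [CharZero 𝕜] {A : V →ₗ[𝕜] V →ₗ[𝕜] V →ₗ[𝕜] V →ₗ[𝕜] 𝕜}
  (hA : IsCurvatureTensor fun a b c d ↦ A a b c d)
include hA

theorem apply_map_last_eq_apply_map_third_of_diag {T : V → V}
    (hT : ∀ t u w, A u t t (T w) = A (T u) t t w) (a b c d : V) :
    A a b c (T d) = A a b (T c) d := by
  have symm (u b c w : V) :
      A u b c (T w) + A u c b (T w) = A w b c (T u) + A w c b (T u) := by
    have hbc := hT (b + c) u w
    simp only [map_add, LinearMap.add_apply, hT b, hT c] at hbc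
    linear_combination hbc + hA.reverse (T u) b c w + hA.reverse (T u) c b w
  rw [antisymm_right_of_bianchi (fun a b c d ↦ hA.anti a b c (T d))
    (fun a b c d ↦ hA.bianchi a b c (T d)) symm, hA.anti_right, neg_neg]

theorem apply_map_diag_iff_apply_map_right (T : V → V) :
    (∀ t u w, A u t t (T w) = A (T u) t t w) ↔ ∀ a b c d, A a b c (T d) = A a b (T c) d :=
  ⟨hA.apply_map_last_eq_apply_map_third_of_diag,
    fun hT t u w ↦ hA.apply_map_last_eq_apply_map_first hT u t t w⟩

end IsCurvatureTensor

end CurvatureTensor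

namespace LinearMap.BilinForm

variable {R M : Type*} [CommRing R] [AddCommGroup M] [Module R M] {B : LinearMap.BilinForm R M}

theorem comp_comm_iff_of_isSelfAdjoint (hB : B.Nondegenerate) {T : M →ₗ[R] M}
    (hT : LinearMap.IsSelfAdjoint B T) (S : M →ₗ[R] M) :
    T ∘ₗ S = S ∘ₗ T ↔ ∀ u w, B (S u) (T w) = B (S (T u)) w := by
  have hinj : Function.Injective B := LinearMap.ker_eq_bot.mp hB.ker_eq_bot
  simp only [LinearMap.ext_iff, LinearMap.comp_apply, ← hT _ _]
  exact forall_congr' fun u ↦ ⟨fun h w ↦ by rw [h], fun h ↦ hinj (LinearMap.ext h)⟩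

end LinearMap.BilinForm

section Tsankov

variable {𝕜 V : Type*} [Field 𝕜] [AddCommGroup V] [Module 𝕜 V]
  {B : LinearMap.BilinForm 𝕜 V} {A : V →ₗ[𝕜] V →ₗ[𝕜] V →ₗ[𝕜] V →ₗ[𝕜] 𝕜}
  (hA : IsCurvatureTensor fun a b c d ↦ A a b c d)
  {R : V →ₗ[𝕜] V →ₗ[𝕜] V →ₗ[𝕜] V} {J : V → V →ₗ[𝕜] V}
include hA

theorem isSelfAdjoint_jacobi (hB : ∀ x y, B x y = B y x)
    (hJ : ∀ t u w, B (J t u) w = A u t t w) (t : V) : LinearMap.IsSelfAdjoint B (J t) :=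
  fun u w ↦ by rw [hJ, hB u, hJ, hA.reverse]

theorem comm_jacobi_iff_comm_curvature [CharZero 𝕜] (hB : B.Nondegenerate)
    (hR : ∀ x y z w, B (R x y z) w = A x y z w) (hJ : ∀ t u w, B (J t u) w = A u t t w)
    {T : V →ₗ[𝕜] V} (hT : LinearMap.IsSelfAdjoint B T) :
    (∀ t, T ∘ₗ J t = J t ∘ₗ T) ↔ ∀ y z, T ∘ₗ R y z = R y z ∘ₗ T := by
  simp only [LinearMap.BilinForm.comp_comm_iff_of_isSelfAdjoint hB hT, hR, hJ]
  exact hA.apply_map_diag_iff_apply_map_right T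

end Tsankov

theorem stmt_4 {V : Type*} [AddCommGroup V] [Module ℝ V]
    (B : LinearMap.BilinForm ℝ V) (hBsymm : ∀ x y, B x y = B y x)
    (hBnd : B.Nondegenerate)
    (A : V →ₗ[ℝ] V →ₗ[ℝ] V →ₗ[ℝ] V →ₗ[ℝ] ℝ)
    (hpair : ∀ x y z w, A x y z w = A z w x y)
    (hanti : ∀ x y z w, A x y z w = -A y x z w)
    (hbianchi : ∀ x y z w, A x y z w + A y z x w + A z x y w = 0)
    (Rop : V →ₗ[ℝ] V →ₗ[ℝ] V →ₗ[ℝ] V)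
    (hRop : ∀ x y z w, B (Rop x y z) w = A x y z w)
    (Jop : V → V →ₗ[ℝ] V)
    (hJop : ∀ x y, Jop x y = Rop y x x) :
    (∀ x y, Jop x ∘ₗ Jop y = Jop y ∘ₗ Jop x) ↔
      (∀ x y z, Jop x ∘ₗ Rop y z = Rop y z ∘ₗ Jop x) := by
  have hA : IsCurvatureTensor fun x y z w ↦ A x y z w := ⟨hpair, hanti, hbianchi⟩
  have hJ (t u w : V) : B (Jop t u) w = A u t t w := by rw [hJop, hRop]
  exact forall_congr' fun x ↦ comm_jacobi_iff_comm_curvature hA hBnd hRop hJ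
    (isSelfAdjoint_jacobi hA hBsymm hJ x)
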